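/- Let p ∈ Δ̄∖Δ be badly degenerate or α-degenerate (none of its five associated triples is a permutation of (0,β,π−β) with 0 < β < π), and let q ∈ Δ. Then the function t ↦ V((1−t)·p + t·q) is differentiable on (0,1) and its derivative has a finite limit as t → 0⁺. -/

import Mathlib

open Real Filter
open Set MeasureTheory intervalIntegral

/-- Milnor's Lobachevsky function `Л(x) = -∫₀ˣ log |2 sin t| dt`. -/
noncomputable def lob (x : ℝ) : ℝ := -∫ t in (0:ℝ)..x, Real.log |2 * Real.sin t|

/-- The truncated volume `V(α₁₂,α₂₃,α₃₁,γ₁,γ₂,γ₃)`, 15-term Lobachevsky formula. -/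
noncomputable def V6 (a12 a23 a31 g1 g2 g3 : ℝ) : ℝ :=
  (lob g1 + lob g2 + lob g3
    + lob ((π + a31 - a12 - g1) / 2) + lob ((π + a12 - a23 - g2) / 2)
    + lob ((π + a23 - a31 - g3) / 2)
    + lob ((π - a31 + a12 - g1) / 2) + lob ((π - a12 + a23 - g2) / 2)
    + lob ((π - a23 + a31 - g3) / 2)
    + lob ((π + a31 + a12 - g1) / 2) + lob ((π + a12 + a23 - g2) / 2)
    + lob ((π + a23 + a31 - g3) / 2)
    + lob ((π - a31 - a12 - g1) / 2) + lob ((π - a12 - a23 - g2) / 2)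
    + lob ((π - a23 - a31 - g3) / 2)) / 2

/-- `V` as a function on ℝ⁶; coordinates `0,1,2,3,4,5` are `α₁₂,α₂₃,α₃₁,γ₁,γ₂,γ₃`. -/
noncomputable def VV (p : Fin 6 → ℝ) : ℝ :=
  V6 (p 0) (p 1) (p 2) (p 3) (p 4) (p 5)

/-- The set Δ ⊂ ℝ⁶. -/
def D6 : Set (Fin 6 → ℝ) :=
  {p | (∀ i, 0 < p i) ∧ p 3 + p 4 + p 5 = π ∧
    p 3 + p 0 + p 2 < π ∧ p 4 + p 1 + p 0 < π ∧ p 5 + p 2 + p 1 < π}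

/-- The closure Δ̄ ⊂ ℝ⁶. -/
def D6bar : Set (Fin 6 → ℝ) :=
  {p | (∀ i, 0 ≤ p i) ∧ p 3 + p 4 + p 5 = π ∧
    p 3 + p 0 + p 2 ≤ π ∧ p 4 + p 1 + p 0 ≤ π ∧ p 5 + p 2 + p 1 ≤ π}

/-- The five associated ideal-tetrahedron angle triples of a point of ℝ⁶. -/
noncomputable def fiveTriples (p : Fin 6 → ℝ) : List (List ℝ) :=
  [ [(π + p 2 - p 0 - p 3) / 2, (π + p 0 - p 1 - p 4) / 2, (π + p 1 - p 2 - p 5) / 2],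
    [(π - p 2 + p 0 - p 3) / 2, (π - p 0 + p 1 - p 4) / 2, (π - p 1 + p 2 - p 5) / 2],
    [p 3, (π + p 2 + p 0 - p 3) / 2, (π - p 2 - p 0 - p 3) / 2],
    [p 4, (π + p 0 + p 1 - p 4) / 2, (π - p 0 - p 1 - p 4) / 2],
    [p 5, (π + p 1 + p 2 - p 5) / 2, (π - p 1 - p 2 - p 5) / 2] ]

/-- A triple is mildly degenerate: a permutation of `(0,β,π−β)` with `0 < β < π`. -/
def IsMildTriple (l : List ℝ) : Prop :=
  ∃ β : ℝ, 0 < β ∧ β < π ∧ l.Perm [0, β, π - β]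

lemma intervalIntegrable_log01 : IntervalIntegrable Real.log volume 0 1 := by
  rw [intervalIntegrable_iff, uIoc_of_le zero_le_one]
  have h : IntegrableOn (fun t : ℝ => -Real.log t) (Ioc (0:ℝ) 1) := by
    apply integrableOn_deriv_of_nonneg (g := fun t : ℝ => t - t * Real.log t)
    · exact (continuous_id.sub Real.continuous_mul_log).continuousOn
    · intro x hx
      have h1 : HasDerivAt (fun t : ℝ => t - t * Real.log t) (1 - (Real.log x + 1)) x :=
        (hasDerivAt_id x).sub (Real.hasDerivAt_mul_log hx.1.ne')
      convert h1 using 1; ring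
    · intro x hx
      have : Real.log x ≤ 0 := Real.log_nonpos hx.1.le hx.2.le
      linarith
  have h3 : IntegrableOn (-(fun t : ℝ => -Real.log t)) (Ioc (0:ℝ) 1) := h.neg
  exact h3.congr_fun (fun t _ => by simp) measurableSet_Ioc

lemma intervalIntegrable_log0 {x : ℝ} (hx : 0 < x) : IntervalIntegrable Real.log volume 0 x := by
  rcases le_total x 1 with h | h
  · exact intervalIntegrable_log01.mono_set (by rw [uIcc_of_le hx.le, uIcc_of_le zero_le_one]; exact Icc_subset_Icc le_rfl h)
  · exact intervalIntegrable_log01.trans (intervalIntegrable_log (by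
      rw [Set.uIcc_of_le h]; intro hc; exact absurd hc.1 (by norm_num)))

lemma tendsto_sin_div (c : ℝ) : Tendsto (fun t : ℝ => Real.sin (c * t) / t) (nhdsWithin 0 {(0:ℝ)}ᶜ) (nhds c) := by
  have h : HasDerivAt (fun t : ℝ => Real.sin (c * t)) c 0 := by
    have := (Real.hasDerivAt_sin (c * 0)).comp 0 ((hasDerivAt_id (0:ℝ)).const_mul c)
    simpa [Function.comp_def] using this
  have := hasDerivAt_iff_tendsto_slope.mp h
  refine this.congr fun t => ?_
  simp [slope_fun_def, vsub_eq_sub, smul_eq_mul, div_eq_inv_mul]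

lemma continuousOn_logsindiv {x : ℝ} (hπ : x < π) :
    ContinuousOn (fun t : ℝ => Real.log (Real.sin t / t)) (Icc 0 x) := by
  intro t ht
  rcases eq_or_lt_of_le ht.1 with rfl | htpos
  · rw [← continuousWithinAt_diff_self]
    have hlim : Tendsto (fun t : ℝ => Real.log (Real.sin t / t)) (nhdsWithin 0 {(0:ℝ)}ᶜ) (nhds 0) := by
      have h1 := tendsto_sin_div 1
      simp only [one_mul] at h1
      have h2 := (Real.continuousAt_log one_ne_zero).tendsto.comp h1
      simpa [Function.comp_def] using h2
    show Tendsto (fun t : ℝ => Real.log (Real.sin t / t)) (nhdsWithin 0 (Icc 0 x \ {0}))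
      (nhds ((fun t : ℝ => Real.log (Real.sin t / t)) 0))
    rw [show ((fun t : ℝ => Real.log (Real.sin t / t)) 0) = 0 by simp]
    exact hlim.mono_left (nhdsWithin_mono _ (fun y hy => hy.2))
  · have hsin : Real.sin t > 0 := Real.sin_pos_of_pos_of_lt_pi htpos (lt_of_le_of_lt ht.2 hπ)
    have : ContinuousAt (fun t : ℝ => Real.log (Real.sin t / t)) t := by
      apply (Real.continuousAt_log (by positivity)).comp
      exact (Real.continuous_sin.continuousAt).div continuousAt_id htpos.ne'
    exact this.continuousWithinAt

lemma integrable_logsin {x : ℝ} (h0 : 0 < x) (hπ : x < π) :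
    IntervalIntegrable (fun t : ℝ => Real.log |2 * Real.sin t|) volume 0 x := by
  rw [intervalIntegrable_iff, uIoc_of_le h0.le]
  have h1 : IntegrableOn (fun t : ℝ => Real.log 2 + Real.log t + Real.log (Real.sin t / t)) (Ioc 0 x) := by
    apply Integrable.add
    · apply Integrable.add (integrableOn_const measure_Ioc_lt_top.ne)
      have := intervalIntegrable_log0 h0
      rw [intervalIntegrable_iff, uIoc_of_le h0.le] at this
      exact this
    · exact ((continuousOn_logsindiv hπ).integrableOn_Icc).mono_set Ioc_subset_Icc_self
  apply h1.congr_fun ?_ measurableSet_Ioc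
  intro t ht
  dsimp only
  have htp : 0 < t := ht.1
  have hsin : 0 < Real.sin t := Real.sin_pos_of_pos_of_lt_pi htp (lt_of_le_of_lt ht.2 hπ)
  have h2 : |2 * Real.sin t| = 2 * Real.sin t := abs_of_pos (by positivity)
  rw [h2, Real.log_mul two_ne_zero hsin.ne']
  have : Real.sin t = t * (Real.sin t / t) := by field_simp
  rw [show Real.log (Real.sin t) = Real.log (t * (Real.sin t / t)) by rw [← this],
    Real.log_mul htp.ne' (by positivity)]
  ring

lemma lob_hasDerivAt {x : ℝ} (h0 : 0 < x) (hπ : x < π) :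
    HasDerivAt lob (-Real.log |2 * Real.sin x|) x := by
  have hsin : 0 < Real.sin x := Real.sin_pos_of_pos_of_lt_pi h0 hπ
  have hmeas : Measurable (fun t : ℝ => Real.log |2 * Real.sin t|) :=
    Real.measurable_log.comp ((Real.measurable_sin.const_mul 2).abs)
  have hcont : ContinuousAt (fun t : ℝ => Real.log |2 * Real.sin t|) x := by
    apply (Real.continuousAt_log (by positivity)).comp
    exact ((continuous_const.mul Real.continuous_sin).abs).continuousAt
  have := (integral_hasDerivAt_right (integrable_logsin h0 hπ)
    (hmeas.aestronglyMeasurable.stronglyMeasurableAtFilter) hcont).neg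
  exact this

lemma log_sin_lin {c : ℝ} (hc : 0 < c) :
    Tendsto (fun t : ℝ => Real.log |2 * Real.sin (c * t)| - Real.log t)
      (nhdsWithin 0 (Set.Ioi 0)) (nhds (Real.log (2 * c))) := by
  have h1 : Tendsto (fun t : ℝ => Real.sin (c * t) / t) (nhdsWithin 0 (Set.Ioi 0)) (nhds c) :=
    (tendsto_sin_div c).mono_left (nhdsWithin_mono _ (fun y hy => ne_of_gt hy))
  have h2 : Tendsto (fun t : ℝ => 2 * (Real.sin (c * t) / t)) (nhdsWithin 0 (Set.Ioi 0))
      (nhds (2 * c)) := h1.const_mul 2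
  have h3 := (Real.continuousAt_log (by positivity : (2:ℝ) * c ≠ 0)).tendsto.comp h2
  apply h3.congr'
  filter_upwards [Ioo_mem_nhdsGT_of_mem
    (show (0:ℝ) ∈ Set.Ico (0:ℝ) (π / c) from ⟨le_rfl, by positivity⟩)] with t ht
  have ht0 : 0 < t := ht.1
  have hct : 0 < c * t := by positivity
  have hctπ : c * t < π := by
    have := ht.2
    calc c * t < c * (π / c) := by apply mul_lt_mul_of_pos_left this hc
    _ = π := by field_simp
  have hsin : 0 < Real.sin (c * t) := Real.sin_pos_of_pos_of_lt_pi hct hctπ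
  show Real.log (2 * (Real.sin (c * t) / t)) = Real.log |2 * Real.sin (c * t)| - Real.log t
  rw [abs_of_pos (by positivity), show 2 * (Real.sin (c * t) / t) = (2 * Real.sin (c * t)) / t by ring,
    Real.log_div (by positivity) ht0.ne']

lemma term_nondeg (A B : ℝ) (hA0 : 0 < A) (hAπ : A < π) :
    Tendsto (fun t : ℝ => (B - A) * (-Real.log |2 * Real.sin ((1 - t) * A + t * B)|))
      (nhdsWithin 0 (Set.Ioi 0))
      (nhds ((B - A) * (-Real.log |2 * Real.sin A|))) := by
  have hsin : 0 < Real.sin A := Real.sin_pos_of_pos_of_lt_pi hA0 hAπ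
  have hcont : ContinuousAt (fun t : ℝ => (B - A) * (-Real.log |2 * Real.sin ((1 - t) * A + t * B)|)) 0 := by
    apply ContinuousAt.mul continuousAt_const
    apply ContinuousAt.neg
    have hu : ContinuousAt (fun t : ℝ => |2 * Real.sin ((1 - t) * A + t * B)|) 0 := by fun_prop
    have hne : |2 * Real.sin ((1 - (0:ℝ)) * A + 0 * B)| ≠ 0 := by
      rw [show (1 - (0:ℝ)) * A + 0 * B = A by ring, abs_ne_zero]
      nlinarith
    exact ContinuousAt.comp (f := fun t : ℝ => |2 * Real.sin ((1 - t) * A + t * B)|) (Real.continuousAt_log hne) hu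
  have h := hcont.tendsto.mono_left (nhdsWithin_le_nhds (s := Set.Ioi (0:ℝ)))
  simpa [show (1 - (0:ℝ)) * A + 0 * B = A by ring] using h

lemma mild1 {A2 A3 : ℝ} (h : 0 < A2) (h' : A2 < π) (he : A3 = π - A2) :
    IsMildTriple [0, A2, A3] := ⟨A2, h, h', by rw [he]⟩

lemma mild2 {A1 A3 : ℝ} (h : 0 < A1) (h' : A1 < π) (he : A3 = π - A1) :
    IsMildTriple [A1, 0, A3] := ⟨A1, h, h', by rw [he]; exact List.Perm.swap 0 A1 _⟩

lemma mild3 {A1 A2 : ℝ} (h : 0 < A1) (h' : A1 < π) (he : A2 = π - A1) :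
    IsMildTriple [A1, A2, 0] := ⟨A1, h, h', by
      rw [he]
      exact (List.Perm.cons A1 (List.Perm.swap 0 (π - A1) [])).trans (List.Perm.swap 0 A1 _)⟩

lemma classify (A1 A2 A3 : ℝ) (h1π : A1 ≤ π) (h2π : A2 ≤ π) (h3π : A3 ≤ π)
    (h10 : 0 ≤ A1) (h20 : 0 ≤ A2) (h30 : 0 ≤ A3)
    (hsum : A1 + A2 + A3 = π)
    (hnm : ¬ IsMildTriple [A1, A2, A3]) :
    (0 < A1 ∧ A1 < π ∧ 0 < A2 ∧ A2 < π ∧ 0 < A3 ∧ A3 < π) ∨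
      (A1 = 0 ∧ A2 = 0 ∧ A3 = π) ∨ (A1 = 0 ∧ A2 = π ∧ A3 = 0) ∨
      (A1 = π ∧ A2 = 0 ∧ A3 = 0) := by
  have hpi := Real.pi_pos
  have t1 : A1 = 0 ∨ A1 = π ∨ (0 < A1 ∧ A1 < π) := by
    rcases eq_or_lt_of_le h10 with h | h
    · exact Or.inl h.symm
    rcases eq_or_lt_of_le h1π with h' | h'
    · exact Or.inr (Or.inl h')
    · exact Or.inr (Or.inr ⟨h, h'⟩)
  have t2 : A2 = 0 ∨ A2 = π ∨ (0 < A2 ∧ A2 < π) := by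
    rcases eq_or_lt_of_le h20 with h | h
    · exact Or.inl h.symm
    rcases eq_or_lt_of_le h2π with h' | h'
    · exact Or.inr (Or.inl h')
    · exact Or.inr (Or.inr ⟨h, h'⟩)
  have t3 : A3 = 0 ∨ A3 = π ∨ (0 < A3 ∧ A3 < π) := by
    rcases eq_or_lt_of_le h30 with h | h
    · exact Or.inl h.symm
    rcases eq_or_lt_of_le h3π with h' | h'
    · exact Or.inr (Or.inl h')
    · exact Or.inr (Or.inr ⟨h, h'⟩)
  rcases t1 with h1 | h1 | ⟨h1, h1'⟩ <;> rcases t2 with h2 | h2 | ⟨h2, h2'⟩ <;>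
    rcases t3 with h3 | h3 | ⟨h3, h3'⟩ <;>
    first
      | (left; exact ⟨by linarith, by linarith, by linarith, by linarith, by linarith, by linarith⟩)
      | (right; left; exact ⟨by linarith, by linarith, by linarith⟩)
      | (right; right; left; exact ⟨by linarith, by linarith, by linarith⟩)
      | (right; right; right; exact ⟨by linarith, by linarith, by linarith⟩)
      | (exfalso; linarith)
      | (subst h1; exact absurd (mild1 (by linarith) (by linarith) (by linarith)) hnm)
      | (subst h2; exact absurd (mild2 (by linarith) (by linarith) (by linarith)) hnm)
      | (subst h3; exact absurd (mild3 (by linarith) (by linarith) (by linarith)) hnm)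

lemma triple_tendsto (A1 A2 A3 B1 B2 B3 : ℝ)
    (hA10 : 0 ≤ A1) (hA1π : A1 ≤ π) (hA20 : 0 ≤ A2) (hA2π : A2 ≤ π)
    (hA30 : 0 ≤ A3) (hA3π : A3 ≤ π)
    (hB10 : 0 < B1) (hB1π : B1 < π) (hB20 : 0 < B2) (hB2π : B2 < π)
    (hB30 : 0 < B3) (hB3π : B3 < π)
    (hsB : B1 + B2 + B3 = π)
    (hnm : ¬ IsMildTriple [A1, A2, A3]) (hsA : A1 + A2 + A3 = π) :
    ∃ L, Tendsto (fun t : ℝ =>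
        (B1 - A1) * (-Real.log |2 * Real.sin ((1 - t) * A1 + t * B1)|)
      + (B2 - A2) * (-Real.log |2 * Real.sin ((1 - t) * A2 + t * B2)|)
      + (B3 - A3) * (-Real.log |2 * Real.sin ((1 - t) * A3 + t * B3)|))
      (nhdsWithin 0 (Set.Ioi 0)) (nhds L) := by
  rcases classify A1 A2 A3 hA1π hA2π hA3π hA10 hA20 hA30 hsA hnm with
    ⟨c1, c2, c3, c4, c5, c6⟩ | ⟨rfl, rfl, rfl⟩ | ⟨rfl, rfl, rfl⟩ | ⟨rfl, rfl, rfl⟩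
  · exact ⟨_, ((term_nondeg A1 B1 c1 c2).add (term_nondeg A2 B2 c3 c4)).add
      (term_nondeg A3 B3 c5 c6)⟩
  · -- (0, 0, π)
    have H1 := (log_sin_lin hB10).const_mul (-B1)
    have H2 := (log_sin_lin hB20).const_mul (-B2)
    have H3 := (log_sin_lin (show (0:ℝ) < π - B3 by linarith)).const_mul (π - B3)
    refine ⟨_, ((H1.add H2).add H3).congr fun t => ?_⟩
    rw [show (1 - t) * 0 + t * B1 = B1 * t by ring, show (1 - t) * 0 + t * B2 = B2 * t by ring,
      show (1 - t) * π + t * B3 = π - (π - B3) * t by ring, Real.sin_pi_sub]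
    linear_combination Real.log t * hsB
  · -- (0, π, 0)
    have H1 := (log_sin_lin hB10).const_mul (-B1)
    have H2 := (log_sin_lin (show (0:ℝ) < π - B2 by linarith)).const_mul (π - B2)
    have H3 := (log_sin_lin hB30).const_mul (-B3)
    refine ⟨_, ((H1.add H2).add H3).congr fun t => ?_⟩
    rw [show (1 - t) * 0 + t * B1 = B1 * t by ring, show (1 - t) * 0 + t * B3 = B3 * t by ring,
      show (1 - t) * π + t * B2 = π - (π - B2) * t by ring, Real.sin_pi_sub]
    linear_combination Real.log t * hsB
  · -- (π, 0, 0)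
    have H1 := (log_sin_lin (show (0:ℝ) < π - B1 by linarith)).const_mul (π - B1)
    have H2 := (log_sin_lin hB20).const_mul (-B2)
    have H3 := (log_sin_lin hB30).const_mul (-B3)
    refine ⟨_, ((H1.add H2).add H3).congr fun t => ?_⟩
    rw [show (1 - t) * 0 + t * B2 = B2 * t by ring, show (1 - t) * 0 + t * B3 = B3 * t by ring,
      show (1 - t) * π + t * B1 = π - (π - B1) * t by ring, Real.sin_pi_sub]
    linear_combination Real.log t * hsB

lemma term_hasDerivAt (A B : ℝ) (hA0 : 0 ≤ A) (hAπ : A ≤ π) (hB0 : 0 < B) (hBπ : B < π)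
    {t : ℝ} (ht0 : 0 < t) (ht1 : t < 1) :
    HasDerivAt (fun s : ℝ => lob ((1 - s) * A + s * B))
      ((B - A) * (-Real.log |2 * Real.sin ((1 - t) * A + t * B)|)) t := by
  have h0 : 0 < (1 - t) * A + t * B := by nlinarith
  have hπ : (1 - t) * A + t * B < π := by nlinarith [Real.pi_pos]
  have hlin : HasDerivAt (fun s : ℝ => (1 - s) * A + s * B) (B - A) t := by
    have h : HasDerivAt (fun s : ℝ => A + (B - A) * s) ((B - A) * 1) t :=
      ((hasDerivAt_id t).const_mul (B - A)).const_add A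
    have h2 := h.congr_of_eventuallyEq
      (Filter.Eventually.of_forall (fun s : ℝ => by ring : ∀ s : ℝ, (1 - s) * A + s * B = A + (B - A) * s))
    simpa using h2
  have hc := (lob_hasDerivAt h0 hπ).comp t hlin
  simpa [Function.comp_def, mul_comm] using hc

set_option maxHeartbeats 2000000 in
theorem V_not_mildly_degenerate_boundary_derivative (p : Fin 6 → ℝ)
    (hbar : p ∈ D6bar) (hni : p ∉ D6)
    (hnomild : ∀ l ∈ fiveTriples p, ¬ IsMildTriple l)
    (q : Fin 6 → ℝ) (hq : q ∈ D6) :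
    (∀ t ∈ Set.Ioo (0:ℝ) 1,
      DifferentiableAt ℝ (fun t : ℝ => VV ((1 - t) • p + t • q)) t) ∧
    ∃ L : ℝ, Tendsto (deriv (fun t : ℝ => VV ((1 - t) • p + t • q)))
      (nhdsWithin 0 (Set.Ioi 0)) (nhds L) := by
  obtain ⟨hpnn, hps, hpa, hpb, hpc⟩ := hbar
  obtain ⟨hqpos, hqs, hqa, hqb, hqc⟩ := hq
  have hp0 := hpnn 0; have hp1 := hpnn 1; have hp2 := hpnn 2
  have hp3 := hpnn 3; have hp4 := hpnn 4; have hp5 := hpnn 5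
  have hq0 := hqpos 0; have hq1 := hqpos 1; have hq2 := hqpos 2
  have hq3 := hqpos 3; have hq4 := hqpos 4; have hq5 := hqpos 5
  have hpi := Real.pi_pos
  have hm1 : ¬ IsMildTriple [(π + p 2 - p 0 - p 3) / 2, (π + p 0 - p 1 - p 4) / 2, (π + p 1 - p 2 - p 5) / 2] :=
    hnomild _ (by simp [fiveTriples])
  have hm2 : ¬ IsMildTriple [(π - p 2 + p 0 - p 3) / 2, (π - p 0 + p 1 - p 4) / 2, (π - p 1 + p 2 - p 5) / 2] :=
    hnomild _ (by simp [fiveTriples])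
  have hm3 : ¬ IsMildTriple [p 3, (π + p 2 + p 0 - p 3) / 2, (π - p 2 - p 0 - p 3) / 2] :=
    hnomild _ (by simp [fiveTriples])
  have hm4 : ¬ IsMildTriple [p 4, (π + p 0 + p 1 - p 4) / 2, (π - p 0 - p 1 - p 4) / 2] :=
    hnomild _ (by simp [fiveTriples])
  have hm5 : ¬ IsMildTriple [p 5, (π + p 1 + p 2 - p 5) / 2, (π - p 1 - p 2 - p 5) / 2] :=
    hnomild _ (by simp [fiveTriples])
  have hFG : (fun t : ℝ => VV ((1 - t) • p + t • q)) = (fun t : ℝ =>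
      (lob ((1 - t) * (p 3) + t * (q 3))
        + lob ((1 - t) * (p 4) + t * (q 4))
        + lob ((1 - t) * (p 5) + t * (q 5))
        + lob ((1 - t) * ((π + p 2 - p 0 - p 3) / 2) + t * ((π + q 2 - q 0 - q 3) / 2))
        + lob ((1 - t) * ((π + p 0 - p 1 - p 4) / 2) + t * ((π + q 0 - q 1 - q 4) / 2))
        + lob ((1 - t) * ((π + p 1 - p 2 - p 5) / 2) + t * ((π + q 1 - q 2 - q 5) / 2))
        + lob ((1 - t) * ((π - p 2 + p 0 - p 3) / 2) + t * ((π - q 2 + q 0 - q 3) / 2))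
        + lob ((1 - t) * ((π - p 0 + p 1 - p 4) / 2) + t * ((π - q 0 + q 1 - q 4) / 2))
        + lob ((1 - t) * ((π - p 1 + p 2 - p 5) / 2) + t * ((π - q 1 + q 2 - q 5) / 2))
        + lob ((1 - t) * ((π + p 2 + p 0 - p 3) / 2) + t * ((π + q 2 + q 0 - q 3) / 2))
        + lob ((1 - t) * ((π + p 0 + p 1 - p 4) / 2) + t * ((π + q 0 + q 1 - q 4) / 2))
        + lob ((1 - t) * ((π + p 1 + p 2 - p 5) / 2) + t * ((π + q 1 + q 2 - q 5) / 2))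
        + lob ((1 - t) * ((π - p 2 - p 0 - p 3) / 2) + t * ((π - q 2 - q 0 - q 3) / 2))
        + lob ((1 - t) * ((π - p 0 - p 1 - p 4) / 2) + t * ((π - q 0 - q 1 - q 4) / 2))
        + lob ((1 - t) * ((π - p 1 - p 2 - p 5) / 2) + t * ((π - q 1 - q 2 - q 5) / 2))) / 2) := by
    funext t
    simp only [VV, V6, Pi.add_apply, Pi.smul_apply, smul_eq_mul]
    ring_nf
  have key : ∀ t ∈ Set.Ioo (0:ℝ) 1, HasDerivAt (fun t : ℝ =>
      (lob ((1 - t) * (p 3) + t * (q 3))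
        + lob ((1 - t) * (p 4) + t * (q 4))
        + lob ((1 - t) * (p 5) + t * (q 5))
        + lob ((1 - t) * ((π + p 2 - p 0 - p 3) / 2) + t * ((π + q 2 - q 0 - q 3) / 2))
        + lob ((1 - t) * ((π + p 0 - p 1 - p 4) / 2) + t * ((π + q 0 - q 1 - q 4) / 2))
        + lob ((1 - t) * ((π + p 1 - p 2 - p 5) / 2) + t * ((π + q 1 - q 2 - q 5) / 2))
        + lob ((1 - t) * ((π - p 2 + p 0 - p 3) / 2) + t * ((π - q 2 + q 0 - q 3) / 2))
        + lob ((1 - t) * ((π - p 0 + p 1 - p 4) / 2) + t * ((π - q 0 + q 1 - q 4) / 2))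
        + lob ((1 - t) * ((π - p 1 + p 2 - p 5) / 2) + t * ((π - q 1 + q 2 - q 5) / 2))
        + lob ((1 - t) * ((π + p 2 + p 0 - p 3) / 2) + t * ((π + q 2 + q 0 - q 3) / 2))
        + lob ((1 - t) * ((π + p 0 + p 1 - p 4) / 2) + t * ((π + q 0 + q 1 - q 4) / 2))
        + lob ((1 - t) * ((π + p 1 + p 2 - p 5) / 2) + t * ((π + q 1 + q 2 - q 5) / 2))
        + lob ((1 - t) * ((π - p 2 - p 0 - p 3) / 2) + t * ((π - q 2 - q 0 - q 3) / 2))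
        + lob ((1 - t) * ((π - p 0 - p 1 - p 4) / 2) + t * ((π - q 0 - q 1 - q 4) / 2))
        + lob ((1 - t) * ((π - p 1 - p 2 - p 5) / 2) + t * ((π - q 1 - q 2 - q 5) / 2))) / 2)
      (((q 3 - (p 3)) * (-Real.log |2 * Real.sin ((1 - t) * (p 3) + t * (q 3))|)
        + (q 4 - (p 4)) * (-Real.log |2 * Real.sin ((1 - t) * (p 4) + t * (q 4))|)
        + (q 5 - (p 5)) * (-Real.log |2 * Real.sin ((1 - t) * (p 5) + t * (q 5))|)
        + ((π + q 2 - q 0 - q 3) / 2 - ((π + p 2 - p 0 - p 3) / 2)) * (-Real.log |2 * Real.sin ((1 - t) * ((π + p 2 - p 0 - p 3) / 2) + t * ((π + q 2 - q 0 - q 3) / 2))|)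
        + ((π + q 0 - q 1 - q 4) / 2 - ((π + p 0 - p 1 - p 4) / 2)) * (-Real.log |2 * Real.sin ((1 - t) * ((π + p 0 - p 1 - p 4) / 2) + t * ((π + q 0 - q 1 - q 4) / 2))|)
        + ((π + q 1 - q 2 - q 5) / 2 - ((π + p 1 - p 2 - p 5) / 2)) * (-Real.log |2 * Real.sin ((1 - t) * ((π + p 1 - p 2 - p 5) / 2) + t * ((π + q 1 - q 2 - q 5) / 2))|)
        + ((π - q 2 + q 0 - q 3) / 2 - ((π - p 2 + p 0 - p 3) / 2)) * (-Real.log |2 * Real.sin ((1 - t) * ((π - p 2 + p 0 - p 3) / 2) + t * ((π - q 2 + q 0 - q 3) / 2))|)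
        + ((π - q 0 + q 1 - q 4) / 2 - ((π - p 0 + p 1 - p 4) / 2)) * (-Real.log |2 * Real.sin ((1 - t) * ((π - p 0 + p 1 - p 4) / 2) + t * ((π - q 0 + q 1 - q 4) / 2))|)
        + ((π - q 1 + q 2 - q 5) / 2 - ((π - p 1 + p 2 - p 5) / 2)) * (-Real.log |2 * Real.sin ((1 - t) * ((π - p 1 + p 2 - p 5) / 2) + t * ((π - q 1 + q 2 - q 5) / 2))|)
        + ((π + q 2 + q 0 - q 3) / 2 - ((π + p 2 + p 0 - p 3) / 2)) * (-Real.log |2 * Real.sin ((1 - t) * ((π + p 2 + p 0 - p 3) / 2) + t * ((π + q 2 + q 0 - q 3) / 2))|)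
        + ((π + q 0 + q 1 - q 4) / 2 - ((π + p 0 + p 1 - p 4) / 2)) * (-Real.log |2 * Real.sin ((1 - t) * ((π + p 0 + p 1 - p 4) / 2) + t * ((π + q 0 + q 1 - q 4) / 2))|)
        + ((π + q 1 + q 2 - q 5) / 2 - ((π + p 1 + p 2 - p 5) / 2)) * (-Real.log |2 * Real.sin ((1 - t) * ((π + p 1 + p 2 - p 5) / 2) + t * ((π + q 1 + q 2 - q 5) / 2))|)
        + ((π - q 2 - q 0 - q 3) / 2 - ((π - p 2 - p 0 - p 3) / 2)) * (-Real.log |2 * Real.sin ((1 - t) * ((π - p 2 - p 0 - p 3) / 2) + t * ((π - q 2 - q 0 - q 3) / 2))|)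
        + ((π - q 0 - q 1 - q 4) / 2 - ((π - p 0 - p 1 - p 4) / 2)) * (-Real.log |2 * Real.sin ((1 - t) * ((π - p 0 - p 1 - p 4) / 2) + t * ((π - q 0 - q 1 - q 4) / 2))|)
        + ((π - q 1 - q 2 - q 5) / 2 - ((π - p 1 - p 2 - p 5) / 2)) * (-Real.log |2 * Real.sin ((1 - t) * ((π - p 1 - p 2 - p 5) / 2) + t * ((π - q 1 - q 2 - q 5) / 2))|)) / 2) t := by
    intro t ht
    exact (((((((((((((((term_hasDerivAt (p 3) (q 3) (by linarith) (by linarith) (by linarith) (by linarith) ht.1 ht.2).add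
      (term_hasDerivAt (p 4) (q 4) (by linarith) (by linarith) (by linarith) (by linarith) ht.1 ht.2)).add
      (term_hasDerivAt (p 5) (q 5) (by linarith) (by linarith) (by linarith) (by linarith) ht.1 ht.2)).add
      (term_hasDerivAt ((π + p 2 - p 0 - p 3) / 2) ((π + q 2 - q 0 - q 3) / 2) (by linarith) (by linarith) (by linarith) (by linarith) ht.1 ht.2)).add
      (term_hasDerivAt ((π + p 0 - p 1 - p 4) / 2) ((π + q 0 - q 1 - q 4) / 2) (by linarith) (by linarith) (by linarith) (by linarith) ht.1 ht.2)).add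
      (term_hasDerivAt ((π + p 1 - p 2 - p 5) / 2) ((π + q 1 - q 2 - q 5) / 2) (by linarith) (by linarith) (by linarith) (by linarith) ht.1 ht.2)).add
      (term_hasDerivAt ((π - p 2 + p 0 - p 3) / 2) ((π - q 2 + q 0 - q 3) / 2) (by linarith) (by linarith) (by linarith) (by linarith) ht.1 ht.2)).add
      (term_hasDerivAt ((π - p 0 + p 1 - p 4) / 2) ((π - q 0 + q 1 - q 4) / 2) (by linarith) (by linarith) (by linarith) (by linarith) ht.1 ht.2)).add
      (term_hasDerivAt ((π - p 1 + p 2 - p 5) / 2) ((π - q 1 + q 2 - q 5) / 2) (by linarith) (by linarith) (by linarith) (by linarith) ht.1 ht.2)).add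
      (term_hasDerivAt ((π + p 2 + p 0 - p 3) / 2) ((π + q 2 + q 0 - q 3) / 2) (by linarith) (by linarith) (by linarith) (by linarith) ht.1 ht.2)).add
      (term_hasDerivAt ((π + p 0 + p 1 - p 4) / 2) ((π + q 0 + q 1 - q 4) / 2) (by linarith) (by linarith) (by linarith) (by linarith) ht.1 ht.2)).add
      (term_hasDerivAt ((π + p 1 + p 2 - p 5) / 2) ((π + q 1 + q 2 - q 5) / 2) (by linarith) (by linarith) (by linarith) (by linarith) ht.1 ht.2)).add
      (term_hasDerivAt ((π - p 2 - p 0 - p 3) / 2) ((π - q 2 - q 0 - q 3) / 2) (by linarith) (by linarith) (by linarith) (by linarith) ht.1 ht.2)).add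
      (term_hasDerivAt ((π - p 0 - p 1 - p 4) / 2) ((π - q 0 - q 1 - q 4) / 2) (by linarith) (by linarith) (by linarith) (by linarith) ht.1 ht.2)).add
      (term_hasDerivAt ((π - p 1 - p 2 - p 5) / 2) ((π - q 1 - q 2 - q 5) / 2) (by linarith) (by linarith) (by linarith) (by linarith) ht.1 ht.2)).div_const 2
  constructor
  · intro t ht
    rw [hFG]
    exact (key t ht).differentiableAt
  · obtain ⟨L1, hT1⟩ := triple_tendsto ((π + p 2 - p 0 - p 3) / 2) ((π + p 0 - p 1 - p 4) / 2) ((π + p 1 - p 2 - p 5) / 2)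
      ((π + q 2 - q 0 - q 3) / 2) ((π + q 0 - q 1 - q 4) / 2) ((π + q 1 - q 2 - q 5) / 2)
      (by linarith) (by linarith) (by linarith) (by linarith) (by linarith) (by linarith)
      (by linarith) (by linarith) (by linarith) (by linarith) (by linarith) (by linarith)
      (by linarith) hm1 (by linarith)
    obtain ⟨L2, hT2⟩ := triple_tendsto ((π - p 2 + p 0 - p 3) / 2) ((π - p 0 + p 1 - p 4) / 2) ((π - p 1 + p 2 - p 5) / 2)
      ((π - q 2 + q 0 - q 3) / 2) ((π - q 0 + q 1 - q 4) / 2) ((π - q 1 + q 2 - q 5) / 2)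
      (by linarith) (by linarith) (by linarith) (by linarith) (by linarith) (by linarith)
      (by linarith) (by linarith) (by linarith) (by linarith) (by linarith) (by linarith)
      (by linarith) hm2 (by linarith)
    obtain ⟨L3, hT3⟩ := triple_tendsto (p 3) ((π + p 2 + p 0 - p 3) / 2) ((π - p 2 - p 0 - p 3) / 2)
      (q 3) ((π + q 2 + q 0 - q 3) / 2) ((π - q 2 - q 0 - q 3) / 2)
      (by linarith) (by linarith) (by linarith) (by linarith) (by linarith) (by linarith)
      (by linarith) (by linarith) (by linarith) (by linarith) (by linarith) (by linarith)
      (by linarith) hm3 (by linarith)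
    obtain ⟨L4, hT4⟩ := triple_tendsto (p 4) ((π + p 0 + p 1 - p 4) / 2) ((π - p 0 - p 1 - p 4) / 2)
      (q 4) ((π + q 0 + q 1 - q 4) / 2) ((π - q 0 - q 1 - q 4) / 2)
      (by linarith) (by linarith) (by linarith) (by linarith) (by linarith) (by linarith)
      (by linarith) (by linarith) (by linarith) (by linarith) (by linarith) (by linarith)
      (by linarith) hm4 (by linarith)
    obtain ⟨L5, hT5⟩ := triple_tendsto (p 5) ((π + p 1 + p 2 - p 5) / 2) ((π - p 1 - p 2 - p 5) / 2)
      (q 5) ((π + q 1 + q 2 - q 5) / 2) ((π - q 1 - q 2 - q 5) / 2)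
      (by linarith) (by linarith) (by linarith) (by linarith) (by linarith) (by linarith)
      (by linarith) (by linarith) (by linarith) (by linarith) (by linarith) (by linarith)
      (by linarith) hm5 (by linarith)
    refine ⟨_, Filter.Tendsto.congr' ?_ (((((hT1.add hT2).add hT3).add hT4).add hT5).div_const 2)⟩
    filter_upwards [Ioo_mem_nhdsGT_of_mem
      (show (0:ℝ) ∈ Set.Ico (0:ℝ) 1 from ⟨le_rfl, one_pos⟩)] with t ht
    have hd : deriv (fun t : ℝ => VV ((1 - t) • p + t • q)) t =
      ((q 3 - (p 3)) * (-Real.log |2 * Real.sin ((1 - t) * (p 3) + t * (q 3))|)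
        + (q 4 - (p 4)) * (-Real.log |2 * Real.sin ((1 - t) * (p 4) + t * (q 4))|)
        + (q 5 - (p 5)) * (-Real.log |2 * Real.sin ((1 - t) * (p 5) + t * (q 5))|)
        + ((π + q 2 - q 0 - q 3) / 2 - ((π + p 2 - p 0 - p 3) / 2)) * (-Real.log |2 * Real.sin ((1 - t) * ((π + p 2 - p 0 - p 3) / 2) + t * ((π + q 2 - q 0 - q 3) / 2))|)
        + ((π + q 0 - q 1 - q 4) / 2 - ((π + p 0 - p 1 - p 4) / 2)) * (-Real.log |2 * Real.sin ((1 - t) * ((π + p 0 - p 1 - p 4) / 2) + t * ((π + q 0 - q 1 - q 4) / 2))|)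
        + ((π + q 1 - q 2 - q 5) / 2 - ((π + p 1 - p 2 - p 5) / 2)) * (-Real.log |2 * Real.sin ((1 - t) * ((π + p 1 - p 2 - p 5) / 2) + t * ((π + q 1 - q 2 - q 5) / 2))|)
        + ((π - q 2 + q 0 - q 3) / 2 - ((π - p 2 + p 0 - p 3) / 2)) * (-Real.log |2 * Real.sin ((1 - t) * ((π - p 2 + p 0 - p 3) / 2) + t * ((π - q 2 + q 0 - q 3) / 2))|)
        + ((π - q 0 + q 1 - q 4) / 2 - ((π - p 0 + p 1 - p 4) / 2)) * (-Real.log |2 * Real.sin ((1 - t) * ((π - p 0 + p 1 - p 4) / 2) + t * ((π - q 0 + q 1 - q 4) / 2))|)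
        + ((π - q 1 + q 2 - q 5) / 2 - ((π - p 1 + p 2 - p 5) / 2)) * (-Real.log |2 * Real.sin ((1 - t) * ((π - p 1 + p 2 - p 5) / 2) + t * ((π - q 1 + q 2 - q 5) / 2))|)
        + ((π + q 2 + q 0 - q 3) / 2 - ((π + p 2 + p 0 - p 3) / 2)) * (-Real.log |2 * Real.sin ((1 - t) * ((π + p 2 + p 0 - p 3) / 2) + t * ((π + q 2 + q 0 - q 3) / 2))|)
        + ((π + q 0 + q 1 - q 4) / 2 - ((π + p 0 + p 1 - p 4) / 2)) * (-Real.log |2 * Real.sin ((1 - t) * ((π + p 0 + p 1 - p 4) / 2) + t * ((π + q 0 + q 1 - q 4) / 2))|)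
        + ((π + q 1 + q 2 - q 5) / 2 - ((π + p 1 + p 2 - p 5) / 2)) * (-Real.log |2 * Real.sin ((1 - t) * ((π + p 1 + p 2 - p 5) / 2) + t * ((π + q 1 + q 2 - q 5) / 2))|)
        + ((π - q 2 - q 0 - q 3) / 2 - ((π - p 2 - p 0 - p 3) / 2)) * (-Real.log |2 * Real.sin ((1 - t) * ((π - p 2 - p 0 - p 3) / 2) + t * ((π - q 2 - q 0 - q 3) / 2))|)
        + ((π - q 0 - q 1 - q 4) / 2 - ((π - p 0 - p 1 - p 4) / 2)) * (-Real.log |2 * Real.sin ((1 - t) * ((π - p 0 - p 1 - p 4) / 2) + t * ((π - q 0 - q 1 - q 4) / 2))|)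
        + ((π - q 1 - q 2 - q 5) / 2 - ((π - p 1 - p 2 - p 5) / 2)) * (-Real.log |2 * Real.sin ((1 - t) * ((π - p 1 - p 2 - p 5) / 2) + t * ((π - q 1 - q 2 - q 5) / 2))|)) / 2 := by
      rw [hFG]; exact (key t ht).deriv
    rw [hd]
    beta_reduce
    ring
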